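/- Let 0 < q < 1, t > 0, n ∈ ℕ, and let u be a nonzero complex number. Then the Stieltjes–Wigert polynomial at the scaled point x_n(t,u) = q^{−nt}u satisfies |S_n(q^{−nt}u; q)| ≤ |u|^n · A_q(−q^{n(t−2)}/|u|) / ((q;q)_∞ · q^{n²(t−1)}). -/

import Mathlib

/-!
Bound `S_n(x)` by the sum of the moduli of its terms. Reflecting `k ↦ n - k`, the identity
`q^{(n-j)²} X^{n-j} = q^{n²} X^n · q^{j²} r^j` with `r = 1/(q^{2n} X)` turns the `(n-j)`-th term into
the constant `q^{n²} X^n` times the `j`-th term of `A_q(-r)`, apart from the factor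
`1/(q;q)_{n-j} ≤ 1/(q;q)_∞`. The resulting partial sum of the positive series `A_q(-r)` is at most its
total, and for `X = q^{-nt}|u|` the constant and `r` are those of the statement.
-/

/-- The finite q-Pochhammer symbol `(a;q)_n = ∏_{j=0}^{n-1} (1 - a q^j)` in `ℂ`,
with real base `q`. -/
noncomputable def qPochC (q : ℝ) (a : ℂ) (n : ℕ) : ℂ :=
  ∏ j ∈ Finset.range n, (1 - a * (q : ℂ) ^ j)

/-- The finite q-Pochhammer symbol `(a;q)_n = ∏_{j=0}^{n-1} (1 - a q^j)` in `ℝ`. -/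
noncomputable def qPochR (q a : ℝ) (n : ℕ) : ℝ :=
  ∏ j ∈ Finset.range n, (1 - a * q ^ j)

/-- The infinite q-Pochhammer symbol `(a;q)_∞ = ∏_{j=0}^{∞} (1 - a q^j)` in `ℝ`. -/
noncomputable def qPochInfR (q a : ℝ) : ℝ :=
  ∏' j : ℕ, (1 - a * q ^ j)

/-- The Stieltjes–Wigert polynomial
`S_n(x;q) = Σ_{k=0}^n q^{k²} (−x)^k / ((q;q)_k (q;q)_{n−k})` in `ℂ`. -/
noncomputable def stieltjesWigertC (q : ℝ) (n : ℕ) (x : ℂ) : ℂ :=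
  ∑ k ∈ Finset.range (n + 1),
    (q : ℂ) ^ (k ^ 2) * (-x) ^ k / (qPochC q q k * qPochC q q (n - k))

/-- The Ramanujan function restricted to real arguments:
`A_q(x) = Σ_{k=0}^∞ q^{k²} (−x)^k / (q;q)_k`. -/
noncomputable def ramanujanAqR (q x : ℝ) : ℝ :=
  ∑' k : ℕ, q ^ (k ^ 2) * (-x) ^ k / qPochR q q k

open Finset Filter Topology

section QPochhammer

variable {q a : ℝ}

lemma one_sub_mul_pow_pos (ha : a < 1) (hq0 : 0 ≤ q) (hq1 : q ≤ 1) (j : ℕ) :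
    0 < 1 - a * q ^ j := by
  have h0 : 0 ≤ q ^ j := pow_nonneg hq0 j
  have h1 : q ^ j ≤ 1 := pow_le_one₀ hq0 hq1
  rcases le_total a 0 with h | h <;> nlinarith

lemma qPochR_pos (ha : a < 1) (hq0 : 0 ≤ q) (hq1 : q ≤ 1) (n : ℕ) : 0 < qPochR q a n :=
  prod_pos fun j _ => one_sub_mul_pow_pos ha hq0 hq1 j

lemma qPochC_ofReal (q a : ℝ) (n : ℕ) : qPochC q a n = qPochR q a n := by
  simp [qPochC, qPochR]

lemma qPochR_antitone (ha0 : 0 ≤ a) (ha1 : a < 1) (hq0 : 0 ≤ q) (hq1 : q ≤ 1) :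
    Antitone (qPochR q a) := by
  refine antitone_nat_of_succ_le fun n => ?_
  simp only [qPochR, prod_range_succ]
  refine mul_le_of_le_one_right (qPochR_pos ha1 hq0 hq1 n).le ?_
  have := mul_nonneg ha0 (pow_nonneg hq0 n)
  linarith

lemma tendsto_qPochR_qPochInfR (hq0 : 0 ≤ q) (hq1 : q < 1) (a : ℝ) :
    Tendsto (qPochR q a) atTop (𝓝 (qPochInfR q a)) := by
  have h : Multipliable fun j : ℕ => 1 - a * q ^ j := by
    simpa [sub_eq_add_neg] using Real.multipliable_one_add_of_summable
      ((summable_geometric_of_lt_one hq0 hq1).mul_left a).neg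
  exact h.hasProd.tendsto_prod_nat

lemma summable_log_one_sub_mul_pow (hq0 : 0 ≤ q) (hq1 : q < 1) (a : ℝ) :
    Summable fun j : ℕ => Real.log (1 - a * q ^ j) := by
  simpa [sub_eq_add_neg] using Real.summable_log_one_add_of_summable
    ((summable_geometric_of_lt_one hq0 hq1).mul_left a).neg

lemma qPochInfR_pos (ha : a < 1) (hq0 : 0 ≤ q) (hq1 : q < 1) : 0 < qPochInfR q a := by
  rw [qPochInfR, ← Real.rexp_tsum_eq_tprod (one_sub_mul_pow_pos ha hq0 hq1.le)
    (summable_log_one_sub_mul_pow hq0 hq1 a)]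
  exact Real.exp_pos _

lemma qPochInfR_le_qPochR (ha0 : 0 ≤ a) (ha1 : a < 1) (hq0 : 0 ≤ q) (hq1 : q < 1) (n : ℕ) :
    qPochInfR q a ≤ qPochR q a n :=
  (qPochR_antitone ha0 ha1 hq0 hq1.le).le_of_tendsto (tendsto_qPochR_qPochInfR hq0 hq1 a) n

end QPochhammer

section Ramanujan

variable {q : ℝ}

lemma summable_pow_sq_mul_pow (hq0 : 0 ≤ q) (hq1 : q < 1) (r : ℝ) :
    Summable fun k : ℕ => q ^ (k ^ 2) * r ^ k := by
  have hlim : Tendsto (fun k : ℕ => q ^ k * r) atTop (𝓝 0) := by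
    simpa using (tendsto_pow_atTop_nhds_zero_of_lt_one hq0 hq1).mul_const r
  refine summable_geometric_two.of_norm_bounded_eventually_nat ?_
  filter_upwards [hlim.norm.eventually (ge_mem_nhds (show ‖(0 : ℝ)‖ < 1 / 2 by norm_num))]
    with k hk
  rw [sq, pow_mul, ← mul_pow, norm_pow]
  exact pow_le_pow_left₀ (norm_nonneg _) hk k

lemma summable_ramanujanAqR (hq0 : 0 < q) (hq1 : q < 1) (x : ℝ) :
    Summable fun k : ℕ => q ^ (k ^ 2) * (-x) ^ k / qPochR q q k := by
  refine ((summable_pow_sq_mul_pow hq0.le hq1 |x|).div_const (qPochInfR q q)).of_norm_bounded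
    fun k => ?_
  rw [norm_div, norm_mul, norm_pow, norm_pow, norm_neg, Real.norm_of_nonneg hq0.le,
    Real.norm_of_nonneg (qPochR_pos hq1 hq0.le hq1.le k).le, Real.norm_eq_abs]
  gcongr
  · exact qPochInfR_pos hq1 hq0.le hq1
  · exact qPochInfR_le_qPochR hq0.le hq1 hq0.le hq1 k

lemma sum_range_le_ramanujanAqR_neg (hq0 : 0 < q) (hq1 : q < 1) {r : ℝ} (hr : 0 ≤ r) (N : ℕ) :
    ∑ k ∈ range N, q ^ (k ^ 2) * r ^ k / qPochR q q k ≤ ramanujanAqR q (-r) := by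
  have hP := qPochR_pos hq1 hq0.le hq1.le
  simpa [ramanujanAqR] using (summable_ramanujanAqR hq0 hq1 (-r)).sum_le_tsum (range N)
    fun k _ => by simpa using div_nonneg (by positivity : 0 ≤ q ^ (k ^ 2) * r ^ k) (hP k).le

end Ramanujan

section StieltjesWigert

variable {q : ℝ}

lemma norm_stieltjesWigertC_le (hq0 : 0 ≤ q) (hq1 : q < 1) (n : ℕ) (x : ℂ) :
    ‖stieltjesWigertC q n x‖ ≤
      ∑ k ∈ range (n + 1), q ^ (k ^ 2) * ‖x‖ ^ k / (qPochR q q k * qPochR q q (n - k)) := by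
  have hP := qPochR_pos hq1 hq0 hq1.le
  refine (norm_sum_le _ _).trans_eq (sum_congr rfl fun k _ => ?_)
  rw [qPochC_ofReal, qPochC_ofReal, ← Complex.ofReal_mul, norm_div, norm_mul, norm_pow, norm_pow,
    norm_neg, Complex.norm_real, Complex.norm_real, Real.norm_of_nonneg hq0,
    Real.norm_of_nonneg (mul_pos (hP k) (hP (n - k))).le]

lemma pow_sq_mul_pow_sub (hq : q ≠ 0) {X : ℝ} (hX : X ≠ 0) {j n : ℕ} (hj : j ≤ n) :
    q ^ ((n - j) ^ 2) * X ^ (n - j) =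
      q ^ (n ^ 2) * X ^ n * (q ^ (j ^ 2) * ((q ^ (2 * n) * X)⁻¹) ^ j) := by
  obtain ⟨m, rfl⟩ := Nat.exists_eq_add_of_le hj
  rw [Nat.add_sub_cancel_left, inv_pow]
  field_simp
  ring

theorem norm_stieltjesWigertC_le_ramanujanAqR (hq0 : 0 < q) (hq1 : q < 1) (n : ℕ) {x : ℂ}
    (hx : x ≠ 0) :
    ‖stieltjesWigertC q n x‖ ≤
      q ^ (n ^ 2) * ‖x‖ ^ n * ramanujanAqR q (-(q ^ (2 * n) * ‖x‖)⁻¹) / qPochInfR q q := by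
  set X := ‖x‖
  set r := (q ^ (2 * n) * X)⁻¹
  set L := qPochInfR q q
  have hX : 0 < X := norm_pos_iff.2 hx
  have hL : 0 < L := qPochInfR_pos hq1 hq0.le hq1
  have hP := qPochR_pos hq1 hq0.le hq1.le
  calc ‖stieltjesWigertC q n x‖
      ≤ ∑ k ∈ range (n + 1), q ^ (k ^ 2) * X ^ k / (qPochR q q k * qPochR q q (n - k)) :=
        norm_stieltjesWigertC_le hq0.le hq1 n x
    _ = ∑ j ∈ range (n + 1),
          q ^ ((n - j) ^ 2) * X ^ (n - j) / (qPochR q q (n - j) * qPochR q q j) := by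
        rw [← sum_range_reflect]
        refine sum_congr rfl fun j hj => ?_
        rw [Nat.add_sub_cancel, Nat.sub_sub_self (mem_range_succ_iff.1 hj)]
    _ ≤ ∑ j ∈ range (n + 1), q ^ (n ^ 2) * X ^ n / L * (q ^ (j ^ 2) * r ^ j / qPochR q q j) := by
        gcongr with j hj
        rw [pow_sq_mul_pow_sub hq0.ne' hX.ne' (mem_range_succ_iff.1 hj), div_mul_div_comm]
        have := hP j
        gcongr
        exact qPochInfR_le_qPochR hq0.le hq1 hq0.le hq1 (n - j)
    _ = q ^ (n ^ 2) * X ^ n / L * ∑ j ∈ range (n + 1), q ^ (j ^ 2) * r ^ j / qPochR q q j := by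
        rw [mul_sum]
    _ ≤ q ^ (n ^ 2) * X ^ n / L * ramanujanAqR q (-r) := by
        gcongr
        exact sum_range_le_ramanujanAqR_neg hq0 hq1 (by positivity) (n + 1)
    _ = q ^ (n ^ 2) * X ^ n * ramanujanAqR q (-r) / L := div_mul_eq_mul_div _ _ _

end StieltjesWigert

theorem abs_stieltjesWigert_scaled_le_general (q t : ℝ) (hq0 : 0 < q) (hq1 : q < 1)
    (n : ℕ) (u : ℂ) (hu : u ≠ 0) :
    ‖stieltjesWigertC q n (((q ^ (-(n : ℝ) * t) : ℝ) : ℂ) * u)‖ ≤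
      ‖u‖ ^ n * ramanujanAqR q (-(q ^ ((n : ℝ) * (t - 2)) / ‖u‖)) /
        (qPochInfR q q * q ^ ((n : ℝ) ^ 2 * (t - 1))) := by
  set s : ℝ := q ^ (-(n : ℝ) * t)
  have hs : 0 < s := Real.rpow_pos_of_pos hq0 _
  have hx : (s : ℂ) * u ≠ 0 := mul_ne_zero (Complex.ofReal_ne_zero.2 hs.ne') hu
  have hnorm : ‖(s : ℂ) * u‖ = s * ‖u‖ := by
    rw [norm_mul, Complex.norm_real, Real.norm_of_nonneg hs.le]
  have hr : (q ^ (2 * n) * (s * ‖u‖))⁻¹ = q ^ ((n : ℝ) * (t - 2)) / ‖u‖ := by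
    rw [← mul_assoc, mul_inv, ← Real.rpow_natCast, ← Real.rpow_add hq0, ← Real.rpow_neg hq0.le,
      div_eq_inv_mul]
    push_cast
    ring_nf
  have hc : q ^ (n ^ 2) * (s * ‖u‖) ^ n = ‖u‖ ^ n / q ^ ((n : ℝ) ^ 2 * (t - 1)) := by
    rw [mul_pow, ← Real.rpow_mul_natCast hq0.le, ← mul_assoc, ← Real.rpow_natCast,
      ← Real.rpow_add hq0, div_eq_mul_inv, ← Real.rpow_neg hq0.le, mul_comm]
    push_cast
    ring_nf
  calc _ ≤ _ := norm_stieltjesWigertC_le_ramanujanAqR hq0 hq1 n hx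
    _ = _ := by rw [hnorm, hr, hc, div_mul_eq_mul_div, div_div, mul_comm (qPochInfR q q)]

/-- For `0 < q < 1`, `t > 0`, `n ∈ ℕ` and nonzero complex `u`,
`|S_n(q^{−nt}u; q)| ≤ |u|^n A_q(−q^{n(t−2)}/|u|) / ((q;q)_∞ q^{n²(t−1)})`. -/
theorem abs_stieltjesWigert_scaled_le (q t : ℝ) (hq0 : 0 < q) (hq1 : q < 1) (ht : 0 < t)
    (n : ℕ) (u : ℂ) (hu : u ≠ 0) :
    ‖stieltjesWigertC q n (((q ^ (-(n : ℝ) * t) : ℝ) : ℂ) * u)‖ ≤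
      ‖u‖ ^ n * ramanujanAqR q (-(q ^ ((n : ℝ) * (t - 2)) / ‖u‖)) /
        (qPochInfR q q * q ^ ((n : ℝ) ^ 2 * (t - 1))) :=
  abs_stieltjesWigert_scaled_le_general q t hq0 hq1 n u hu
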